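/- Let G ≅ (ℤ/2ℤ)^d be an elementary abelian 2-group of order n = 2^d with d ≥ 1, let G* = G \ {1}, and let 1 ≤ k ≤ n−1. Let Pr(Diam > 2) be the probability, under the uniform distribution on k-element subsets S of G*, that there exists y ∈ G* with y ∉ S and y not expressible as s₁s₂ with s₁, s₂ ∈ S. Then p(n, k, (n−2)/2) − k/(n−1) ≤ Pr(Diam > 2) ≤ (n−1) · p(n, k, (n−2)/2). -/

import Mathlib

/-- Integer binomial coefficient: `intChoose a b` is zero unless `0 ≤ b ≤ a`. -/
def intChoose (a b : ℤ) : ℤ :=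
  if 0 ≤ b ∧ b ≤ a then (a.toNat.choose b.toNat : ℤ) else 0

/-- `p(n,k,t) = (∑_{i=0}^t (-1)^i C(t,i) C(n-1-2i, k-2i)) / C(n-1,k)`. -/
def pFun (n k t : ℕ) : ℚ :=
  (∑ i ∈ Finset.range (t + 1),
      (-1) ^ i * (intChoose t i : ℚ) * (intChoose ((n : ℤ) - 1 - 2 * i) ((k : ℤ) - 2 * i) : ℚ))
    / ((n - 1).choose k : ℚ)

/-! As every element is an involution, `y = s₁ * s₂` iff `s₂ = s₁ * y`. So for `y ≠ 1`, the event
`y ∉ S * S` says that `S` contains none of the `(n - 2) / 2` pairs `{s, s * y}`, which partition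
`G* \ {y}`; inclusion–exclusion over these disjoint pairs shows that this event has probability
exactly `p(n, k, (n - 2) / 2)`. The event `Diam > 2` is the union over `y ∈ G*` of the events
`y ∉ S ∧ y ∉ S * S`: the union bound gives the upper bound, and a single `y`, together with
`Pr(y ∈ S) = k / (n - 1)`, gives the lower bound. -/

open Finset

theorem intChoose_natCast (a b : ℕ) : intChoose a b = a.choose b := by
  unfold intChoose
  split_ifs with h
  · simp
  · rw [Nat.choose_eq_zero_of_lt (by omega), Nat.cast_zero]

theorem intChoose_of_neg {a b : ℤ} (hb : b < 0) : intChoose a b = 0 :=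
  if_neg (by omega)

namespace Finset

variable {α β ι : Type*} [DecidableEq α]

theorem card_filter_forall_not_eq_sum_powerset (𝒳 : Finset β) (P : Finset ι)
    (R : ι → β → Prop) [∀ i, DecidablePred (R i)] :
    (#{x ∈ 𝒳 | ∀ i ∈ P, ¬ R i x} : ℤ) =
      ∑ T ∈ P.powerset, (-1 : ℤ) ^ #T * #{x ∈ 𝒳 | ∀ i ∈ T, R i x} := by
  classical
  calc (#{x ∈ 𝒳 | ∀ i ∈ P, ¬ R i x} : ℤ)
      = ∑ x ∈ 𝒳, ∑ T ∈ {i ∈ P | R i x}.powerset, (-1 : ℤ) ^ #T := by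
        rw [card_filter]
        push_cast
        refine sum_congr rfl fun x _ => ?_
        rw [sum_powerset_neg_one_pow_card]
        simp only [filter_eq_empty_iff]
    _ = ∑ x ∈ 𝒳, ∑ T ∈ P.powerset, if ∀ i ∈ T, R i x then (-1 : ℤ) ^ #T else 0 := by
        refine sum_congr rfl fun x _ => ?_
        rw [← sum_filter]
        congr 1
        ext T
        simp only [mem_powerset, mem_filter, subset_iff]
        grind
    _ = ∑ T ∈ P.powerset, (-1 : ℤ) ^ #T * #{x ∈ 𝒳 | ∀ i ∈ T, R i x} := by
        rw [sum_comm]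
        refine sum_congr rfl fun T _ => ?_
        rw [← sum_filter, sum_const, nsmul_eq_mul, mul_comm]

theorem card_filter_powersetCard_subset_eq_intChoose {B X : Finset α} (hBX : B ⊆ X) (k : ℕ) :
    (#{S ∈ X.powersetCard k | B ⊆ S} : ℤ) = intChoose (#X - #B) (k - #B) := by
  by_cases hBk : #B ≤ k
  · rw [card_filter_powersetCard_subset B X k hBX hBk, ← intChoose_natCast,
      Nat.cast_sub (card_le_card hBX), Nat.cast_sub hBk]
  · rw [intChoose_of_neg (by omega), filter_false_of_mem, card_empty, Nat.cast_zero]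
    intro S hS hBS
    exact hBk ((card_le_card hBS).trans (mem_powersetCard.mp hS).2.le)

theorem card_filter_powersetCard_forall_not_subset {P : Finset (Finset α)} {X : Finset α}
    (hPX : ∀ p ∈ P, p ⊆ X) (hP2 : ∀ p ∈ P, #p = 2)
    (hdisj : (P : Set (Finset α)).PairwiseDisjoint id) (k : ℕ) :
    (#{S ∈ X.powersetCard k | ∀ p ∈ P, ¬ p ⊆ S} : ℤ) =
      ∑ i ∈ range (#P + 1), (-1) ^ i * (#P).choose i * intChoose (#X - 2 * i) (k - 2 * i) := by
  have hcover : ∀ T ∈ P.powerset,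
      (#{S ∈ X.powersetCard k | ∀ p ∈ T, p ⊆ S} : ℤ) =
        intChoose (#X - 2 * #T) (k - 2 * #T) := by
    intro T hT
    have hTP := mem_powerset.mp hT
    have hcard : #(T.biUnion id) = 2 * #T := by
      rw [card_biUnion (hdisj.subset hTP),
        sum_const_nat (f := fun p => #(id p)) fun p hp => hP2 p (hTP hp), mul_comm]
    have hfilter : {S ∈ X.powersetCard k | ∀ p ∈ T, p ⊆ S} =
        {S ∈ X.powersetCard k | T.biUnion id ⊆ S} :=
      filter_congr fun S _ => biUnion_subset.symm
    rw [hfilter, card_filter_powersetCard_subset_eq_intChoose (B := T.biUnion id)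
      (biUnion_subset.mpr fun p hp => hPX p (hTP hp)), hcard]
    push_cast
    rfl
  rw [card_filter_forall_not_eq_sum_powerset, sum_congr rfl fun T hT => by rw [hcover T hT],
    sum_powerset_apply_card (fun i => (-1 : ℤ) ^ i * intChoose (#X - 2 * i) (k - 2 * i))]
  refine sum_congr rfl fun i _ => ?_
  rw [nsmul_eq_mul]
  ring

theorem card_filter_mem_powersetCard_mul_card {X : Finset α} {a : α} (ha : a ∈ X) (k : ℕ) :
    #{S ∈ X.powersetCard k | a ∈ S} * #X = k * (#X).choose k := by
  obtain _ | j := k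
  · simp
  obtain ⟨m, hm⟩ : ∃ m, #X = m + 1 := Nat.exists_eq_add_one_of_ne_zero (card_ne_zero_of_mem ha)
  have hfilter :
      {S ∈ X.powersetCard (j + 1) | a ∈ S} = {S ∈ X.powersetCard (j + 1) | {a} ⊆ S} :=
    filter_congr fun S _ => singleton_subset_iff.symm
  rw [hfilter, card_filter_powersetCard_subset {a} X (j + 1) (singleton_subset_iff.mpr ha)
    (by simp), card_singleton, hm, Nat.add_sub_cancel, Nat.add_sub_cancel, mul_comm,
    Nat.add_one_mul_choose_eq, mul_comm]

def pairsOf (f : α → α) (Y : Finset α) : Finset (Finset α) :=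
  Y.image fun s => {s, f s}

variable {f : α → α} {Y : Finset α}

theorem pair_eq_of_mem_pair (hf : Function.Involutive f) {s x : α}
    (hx : x ∈ ({s, f s} : Finset α)) :
    ({x, f x} : Finset α) = {s, f s} := by
  rcases mem_insert.mp hx with rfl | hx
  · rfl
  · rw [mem_singleton.mp hx, hf s, pair_comm]

theorem pairwiseDisjoint_pairsOf (hf : Function.Involutive f) (Y : Finset α) :
    (pairsOf f Y : Set (Finset α)).PairwiseDisjoint id := by
  rintro _ hp _ hq hne
  obtain ⟨s, -, rfl⟩ := mem_image.mp hp
  obtain ⟨u, -, rfl⟩ := mem_image.mp hq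
  refine disjoint_left.mpr fun x hxs hxu => hne ?_
  rw [← pair_eq_of_mem_pair hf hxs, pair_eq_of_mem_pair hf hxu]

theorem subset_of_mem_pairsOf (hY : ∀ s ∈ Y, f s ∈ Y) {p : Finset α} (hp : p ∈ pairsOf f Y) :
    p ⊆ Y := by
  obtain ⟨s, hs, rfl⟩ := mem_image.mp hp
  exact insert_subset hs (singleton_subset_iff.mpr (hY s hs))

theorem card_eq_two_of_mem_pairsOf (hfix : ∀ x, f x ≠ x) {p : Finset α} (hp : p ∈ pairsOf f Y) :
    #p = 2 := by
  obtain ⟨s, -, rfl⟩ := mem_image.mp hp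
  exact card_pair (hfix s).symm

theorem biUnion_pairsOf (hY : ∀ s ∈ Y, f s ∈ Y) : (pairsOf f Y).biUnion id = Y :=
  Subset.antisymm (biUnion_subset.mpr fun _ => subset_of_mem_pairsOf hY)
    fun s hs => mem_biUnion.mpr ⟨{s, f s}, mem_image_of_mem _ hs, mem_insert_self _ _⟩

theorem two_mul_card_pairsOf (hf : Function.Involutive f) (hfix : ∀ x, f x ≠ x)
    (hY : ∀ s ∈ Y, f s ∈ Y) : 2 * #(pairsOf f Y) = #Y := by
  conv_rhs => rw [← biUnion_pairsOf hY]
  rw [card_biUnion (pairwiseDisjoint_pairsOf hf Y),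
    sum_const_nat (f := fun p => #(id p)) fun p => card_eq_two_of_mem_pairsOf hfix, mul_comm]

end Finset

theorem pFun_mul_choose {n k : ℕ} (t : ℕ) (hk : k ≤ n - 1) :
    pFun n k t * (n - 1).choose k =
      ((∑ i ∈ range (t + 1),
        (-1) ^ i * t.choose i * intChoose ((n : ℤ) - 1 - 2 * i) ((k : ℤ) - 2 * i) : ℤ) : ℚ) := by
  rw [pFun, div_mul_cancel₀ _ (by exact_mod_cast (Nat.choose_pos hk).ne')]
  push_cast [intChoose_natCast]
  rfl

section ElementaryAbelian

variable {G : Type*} [Group G]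

theorem eq_mul_iff_eq_mul_of_mul_self (helem : ∀ x : G, x * x = 1) {y s₁ s₂ : G} :
    y = s₁ * s₂ ↔ s₂ = s₁ * y := by
  constructor <;> rintro rfl <;> rw [← mul_assoc, helem, one_mul]

theorem involutive_mul_right (helem : ∀ x : G, x * x = 1) (y : G) :
    Function.Involutive (· * y) :=
  fun s => show s * y * y = s by rw [mul_assoc, helem, mul_one]

variable [DecidableEq G] [Fintype G]

def avoidSq (k : ℕ) (y : G) : Finset (Finset G) :=
  {S ∈ (univ.erase (1 : G)).powersetCard k | ∀ s₁ ∈ S, ∀ s₂ ∈ S, y ≠ s₁ * s₂}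

theorem mul_mem_erase_erase (helem : ∀ x : G, x * x = 1) {y s : G}
    (hs : s ∈ (univ.erase 1).erase y) :
    s * y ∈ (univ.erase 1).erase y := by
  obtain ⟨hsy, hs1, -⟩ := mem_erase.mp hs |>.imp_right mem_erase.mp
  refine mem_erase.mpr
    ⟨fun h => hs1 (mul_eq_right.mp h), mem_erase.mpr ⟨fun h => hsy ?_, mem_univ _⟩⟩
  calc s = s * y * y := (involutive_mul_right helem y s).symm
    _ = y := by rw [h, one_mul]

theorem avoidSq_eq_filter_pairsOf (helem : ∀ x : G, x * x = 1) (k : ℕ) (y : G) :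
    avoidSq k y = {S ∈ (univ.erase (1 : G)).powersetCard k |
      ∀ p ∈ pairsOf (· * y) ((univ.erase 1).erase y), ¬ p ⊆ S} := by
  refine filter_congr fun S hS => ⟨fun h p hp hpS => ?_, fun h s₁ hs₁ s₂ hs₂ hy => ?_⟩
  · obtain ⟨s, -, rfl⟩ := mem_image.mp hp
    exact h s (hpS (mem_insert_self _ _)) (s * y) (hpS (by simp))
      ((eq_mul_iff_eq_mul_of_mul_self helem).mpr rfl)
  · have hS1 : (1 : G) ∉ S := fun h1 => (mem_erase.mp ((mem_powersetCard.mp hS).1 h1)).1 rfl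
    rw [eq_mul_iff_eq_mul_of_mul_self helem] at hy
    subst hy
    have hs₁y : s₁ ≠ y := by
      rintro rfl
      exact hS1 (helem s₁ ▸ hs₂)
    refine h {s₁, s₁ * y} (mem_image_of_mem _ (mem_erase.mpr ⟨hs₁y, ?_⟩)) (insert_subset hs₁ ?_)
    · exact (mem_powersetCard.mp hS).1 hs₁
    · exact singleton_subset_iff.mpr hs₂

theorem card_avoidSq (helem : ∀ x : G, x * x = 1) {y : G} (hy : y ≠ 1) (k : ℕ) :
    (#(avoidSq k y) : ℤ) = ∑ i ∈ range ((Fintype.card G - 2) / 2 + 1),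
      (-1) ^ i * ((Fintype.card G - 2) / 2).choose i *
        intChoose ((Fintype.card G : ℤ) - 1 - 2 * i) ((k : ℤ) - 2 * i) := by
  have hX : #(univ.erase (1 : G)) = Fintype.card G - 1 := by
    rw [card_erase_of_mem (mem_univ _), card_univ]
  have hY : #((univ.erase (1 : G)).erase y) = Fintype.card G - 2 := by
    rw [card_erase_of_mem (mem_erase.mpr ⟨hy, mem_univ _⟩), hX, Nat.sub_sub]
  have hfix : ∀ x : G, x * y ≠ x := fun x h => hy (mul_eq_left.mp h)
  have hpairs := two_mul_card_pairsOf (involutive_mul_right helem y) hfix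
    fun _ => mul_mem_erase_erase helem
  have hX1 : ((Fintype.card G - 1 : ℕ) : ℤ) = Fintype.card G - 1 :=
    Nat.cast_sub Fintype.card_pos
  have hcount := card_filter_powersetCard_forall_not_subset
    (fun p hp => (subset_of_mem_pairsOf (fun _ => mul_mem_erase_erase helem) hp).trans
      (erase_subset _ _))
    (fun p => card_eq_two_of_mem_pairsOf hfix) (pairwiseDisjoint_pairsOf
      (involutive_mul_right helem y) _) k
  rw [hX, hX1, show #(pairsOf (· * y) ((univ.erase (1 : G)).erase y)) =
    (Fintype.card G - 2) / 2 by omega] at hcount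
  rw [avoidSq_eq_filter_pairsOf helem]
  convert hcount

theorem card_avoidSq_eq_pFun_mul (helem : ∀ x : G, x * x = 1) {y : G} (hy : y ≠ 1) {k : ℕ}
    (hk : k ≤ Fintype.card G - 1) :
    (#(avoidSq k y) : ℚ) = pFun (Fintype.card G) k ((Fintype.card G - 2) / 2) *
      #((univ.erase (1 : G)).powersetCard k) := by
  rw [card_powersetCard, card_erase_of_mem (mem_univ _), card_univ, pFun_mul_choose _ hk]
  exact_mod_cast card_avoidSq helem hy k

theorem card_avoidSq_le_card_filter_exists_add {k : ℕ} {y : G} (hy : y ∈ univ.erase 1) :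
    #(avoidSq k y) ≤ #(((univ.erase (1 : G)).powersetCard k).filter fun S =>
        ∃ y ∈ univ.erase (1 : G), y ∉ S ∧ ∀ s₁ ∈ S, ∀ s₂ ∈ S, y ≠ s₁ * s₂) +
      #{S ∈ (univ.erase (1 : G)).powersetCard k | y ∈ S} := by
  rw [← card_filter_add_card_filter_not (s := avoidSq k y) (y ∈ ·), add_comm]
  refine add_le_add (card_le_card fun S hS => ?_)
    (card_le_card (filter_subset_filter _ (filter_subset _ _)))
  obtain ⟨hS, hyS⟩ := mem_filter.mp hS
  obtain ⟨h𝒮, hprod⟩ := mem_filter.mp hS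
  simp only [mem_filter]
  exact ⟨h𝒮, y, hy, hyS, hprod⟩

theorem card_filter_exists_le_sum_card_avoidSq (k : ℕ) :
    #(((univ.erase (1 : G)).powersetCard k).filter fun S => ∃ y ∈ univ.erase (1 : G),
        y ∉ S ∧ ∀ s₁ ∈ S, ∀ s₂ ∈ S, y ≠ s₁ * s₂) ≤
      ∑ y ∈ univ.erase (1 : G), #(avoidSq k y) :=
  calc _ ≤ #((univ.erase (1 : G)).biUnion (avoidSq k)) := card_le_card fun S hS => by
        simp only [mem_filter] at hS
        obtain ⟨h𝒮, y, hy, -, hprod⟩ := hS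
        exact mem_biUnion.mpr ⟨y, hy, mem_filter.mpr ⟨h𝒮, hprod⟩⟩
    _ ≤ _ := card_biUnion_le

theorem pFun_sub_mul_le_card_filter_exists (helem : ∀ x : G, x * x = 1) {k : ℕ} (hk1 : 1 ≤ k)
    (hk2 : k ≤ Fintype.card G - 1) :
    (pFun (Fintype.card G) k ((Fintype.card G - 2) / 2) - k / ((Fintype.card G : ℚ) - 1)) *
        #((univ.erase (1 : G)).powersetCard k) ≤
      #(((univ.erase (1 : G)).powersetCard k).filter fun S => ∃ y ∈ univ.erase (1 : G),
        y ∉ S ∧ ∀ s₁ ∈ S, ∀ s₂ ∈ S, y ≠ s₁ * s₂) := by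
  have hX : #(univ.erase (1 : G)) = Fintype.card G - 1 := by
    rw [card_erase_of_mem (mem_univ _), card_univ]
  obtain ⟨y, hy⟩ : (univ.erase (1 : G)).Nonempty := card_pos.mp (by omega)
  have hn : (0 : ℚ) < #(univ.erase (1 : G)) := by exact_mod_cast card_pos.mpr ⟨y, hy⟩
  have hmem : (#{S ∈ (univ.erase (1 : G)).powersetCard k | y ∈ S} : ℚ) * #(univ.erase (1 : G)) =
      k * #((univ.erase (1 : G)).powersetCard k) := by
    rw [card_powersetCard]
    exact_mod_cast card_filter_mem_powersetCard_mul_card hy k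
  have hlow := Nat.cast_le (α := ℚ) |>.mpr (card_avoidSq_le_card_filter_exists_add (k := k) hy)
  rw [Nat.cast_add, card_avoidSq_eq_pFun_mul helem (ne_of_mem_erase hy) hk2] at hlow
  rw [sub_mul, div_mul_eq_mul_div, ← hmem, ← Nat.cast_pred Fintype.card_pos, ← hX,
    mul_div_cancel_right₀ _ hn.ne']
  linarith

theorem card_filter_exists_le_mul_pFun (helem : ∀ x : G, x * x = 1) {k : ℕ}
    (hk : k ≤ Fintype.card G - 1) :
    (#(((univ.erase (1 : G)).powersetCard k).filter fun S => ∃ y ∈ univ.erase (1 : G),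
        y ∉ S ∧ ∀ s₁ ∈ S, ∀ s₂ ∈ S, y ≠ s₁ * s₂) : ℚ) ≤
      ((Fintype.card G : ℚ) - 1) * (pFun (Fintype.card G) k ((Fintype.card G - 2) / 2) *
        #((univ.erase (1 : G)).powersetCard k)) :=
  calc _ ≤ ∑ y ∈ univ.erase (1 : G), (#(avoidSq k y) : ℚ) := by
        rw [← Nat.cast_sum, Nat.cast_le]
        exact card_filter_exists_le_sum_card_avoidSq k
    _ = _ := by
        rw [sum_congr rfl fun y hy => card_avoidSq_eq_pFun_mul helem (ne_of_mem_erase hy) hk,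
          sum_const, nsmul_eq_mul, card_erase_of_mem (mem_univ _), card_univ,
          Nat.cast_pred Fintype.card_pos]

end ElementaryAbelian

theorem stmt_7_general {G : Type*} [Group G] [Fintype G] [DecidableEq G]
    (n k : ℕ) (hcard : Fintype.card G = n)
    (helem : ∀ x : G, x * x = 1)
    (hk1 : 1 ≤ k) (hk2 : k ≤ n - 1) :
    pFun n k ((n - 2) / 2) - (k : ℚ) / ((n : ℚ) - 1) ≤
        ((((Finset.univ.erase (1 : G)).powersetCard k).filter
            (fun S => ∃ y ∈ Finset.univ.erase (1 : G),
              y ∉ S ∧ ∀ s₁ ∈ S, ∀ s₂ ∈ S, y ≠ s₁ * s₂)).card : ℚ)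
          / (((Finset.univ.erase (1 : G)).powersetCard k).card : ℚ) ∧
      ((((Finset.univ.erase (1 : G)).powersetCard k).filter
          (fun S => ∃ y ∈ Finset.univ.erase (1 : G),
            y ∉ S ∧ ∀ s₁ ∈ S, ∀ s₂ ∈ S, y ≠ s₁ * s₂)).card : ℚ)
          / (((Finset.univ.erase (1 : G)).powersetCard k).card : ℚ)
        ≤ ((n : ℚ) - 1) * pFun n k ((n - 2) / 2) := by
  subst hcard
  have hN : (0 : ℚ) < #((univ.erase (1 : G)).powersetCard k) := by
    rw [card_powersetCard, card_erase_of_mem (mem_univ _), card_univ]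
    exact_mod_cast Nat.choose_pos hk2
  constructor
  · rw [le_div_iff₀ hN]
    exact pFun_sub_mul_le_card_filter_exists helem hk1 hk2
  · rw [div_le_iff₀ hN, mul_assoc]
    exact card_filter_exists_le_mul_pFun helem hk2

theorem stmt_7 {G : Type*} [Group G] [Fintype G] [DecidableEq G]
    (d n k : ℕ) (hd : 1 ≤ d) (hn : n = 2 ^ d) (hcard : Fintype.card G = n)
    (helem : ∀ x : G, x * x = 1)
    (hk1 : 1 ≤ k) (hk2 : k ≤ n - 1) :
    pFun n k ((n - 2) / 2) - (k : ℚ) / ((n : ℚ) - 1) ≤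
        ((((Finset.univ.erase (1 : G)).powersetCard k).filter
            (fun S => ∃ y ∈ Finset.univ.erase (1 : G),
              y ∉ S ∧ ∀ s₁ ∈ S, ∀ s₂ ∈ S, y ≠ s₁ * s₂)).card : ℚ)
          / (((Finset.univ.erase (1 : G)).powersetCard k).card : ℚ) ∧
      ((((Finset.univ.erase (1 : G)).powersetCard k).filter
          (fun S => ∃ y ∈ Finset.univ.erase (1 : G),
            y ∉ S ∧ ∀ s₁ ∈ S, ∀ s₂ ∈ S, y ≠ s₁ * s₂)).card : ℚ)
          / (((Finset.univ.erase (1 : G)).powersetCard k).card : ℚ)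
        ≤ ((n : ℚ) - 1) * pFun n k ((n - 2) / 2) :=
  stmt_7_general n k hcard helem hk1 hk2
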